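/- Let (V, σ) be a real symplectic vector space of dimension 2n, and let W₁, W₂, W₃ be Lagrangian subspaces with Wⱼ ∩ Wₖ = {0} for j ≠ k. Then there exists a symplectic basis (e₁,...,eₙ,f₁,...,fₙ) of V such that, in the corresponding coordinates (x⃗, p⃗), W₁ = {(x⃗, 0)}, W₂ = {(0, p⃗)}, and W₃ = {(x⃗, A x⃗) | x⃗ ∈ ℝⁿ} for some invertible symmetric matrix A ∈ GL(n, ℝ). -/

import Mathlib

open Module

/-- The symplectic orthogonal complement `W^⊥ = {f ∈ V | σ(f,g) = 0 for all g ∈ W}`. -/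
def sympOrth {V : Type*} [AddCommGroup V] [Module ℝ V]
    (σ : V →ₗ[ℝ] V →ₗ[ℝ] ℝ) (W : Submodule ℝ V) : Submodule ℝ V where
  carrier := {f | ∀ g ∈ W, σ f g = 0}
  zero_mem' := by intro g hg; simp
  add_mem' := by intro a b ha hb g hg; simp [ha g hg, hb g hg]
  smul_mem' := by intro c a ha g hg; simp [ha g hg]

/-!
Two transverse Lagrangians are put in duality by `σ`: a basis `e` of `W₁` has a `σ`-dual family
`f` in `W₂`, and `(e, f)` is a symplectic basis. As a complement of `W₂`, `W₃` is the graph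
`{u + T u | u ∈ W₁}` of a linear map `T : W₁ → W₂`, whose matrix `Aᵢⱼ = σ(eᵢ, T eⱼ)` in these
bases is symmetric because `W₃` is isotropic and invertible because `W₃ ∩ W₁ = 0`.
-/

open Submodule Set

lemma exists_linearIndependent_fin_span_eq {K V : Type*} [DivisionRing K] [AddCommGroup V]
    [Module K V] [FiniteDimensional K V] {n : ℕ} (W : Submodule K V) (hW : finrank K W = n) :
    ∃ e : Fin n → V, LinearIndependent K e ∧ span K (range e) = W := by
  obtain ⟨e, -, he, hli⟩ := exists_fun_fin_finrank_span_eq K (W : Set V)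
  have hn : finrank K (span K (W : Set V)) = n := by rwa [span_eq]
  subst hn
  exact ⟨e, hli, he.trans (span_eq W)⟩

lemma Submodule.exists_eq_map_id_add_of_isCompl {R M : Type*} [Ring R] [AddCommGroup M]
    [Module R M] {W₁ W₂ W₃ : Submodule R M} (hsup : W₁ ⊔ W₂ = ⊤) (h₂₃ : IsCompl W₂ W₃) :
    ∃ T : M →ₗ[R] M, (∀ v, T v ∈ W₂) ∧ W₃ = W₁.map (LinearMap.id + T) := by
  -- `T = -(projection onto W₂ along W₃)`, so `u + T u` is the `W₃`-component of `u`.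
  refine ⟨-W₂.projection W₃ h₂₃, fun v => neg_mem (projection_apply_mem h₂₃ v), ?_⟩
  refine le_antisymm (fun v hv => ?_) (map_le_iff_le_comap.2 fun u _ => by
    simpa [← sub_eq_add_neg] using sub_projection_mem h₂₃ u)
  obtain ⟨u, hu, y, hy, rfl⟩ := mem_sup.1 (hsup ▸ mem_top : v ∈ W₁ ⊔ W₂)
  have hP : W₂.projection W₃ h₂₃ u + y = 0 := by
    rw [← projection_apply_of_mem_left h₂₃ hy, ← map_add]
    exact projection_apply_of_mem_right h₂₃ hv
  refine ⟨u, hu, ?_⟩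
  simp [eq_neg_of_add_eq_zero_right hP]

section Lagrangian

variable {V : Type*} [AddCommGroup V] [Module ℝ V] {σ : V →ₗ[ℝ] V →ₗ[ℝ] ℝ}

lemma sympOrth_eq_orthogonal (hσ : σ.IsAlt) (W : Submodule ℝ V) :
    sympOrth σ W = LinearMap.BilinForm.orthogonal σ W := by
  ext v
  exact forall₂_congr fun _ _ => hσ.eq_iff

lemma apply_eq_zero_of_eq_sympOrth {W : Submodule ℝ V} (hW : W = sympOrth σ W) {v w : V}
    (hv : v ∈ W) (hw : w ∈ W) : σ v w = 0 := by
  rw [hW] at hv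
  exact hv w hw

lemma eq_zero_of_forall_apply_eq_zero (hσ : σ.IsAlt) (hnd : σ.SeparatingLeft)
    {W₁ W₂ : Submodule ℝ V} (hW₂ : W₂ = sympOrth σ W₂) (hsup : W₁ ⊔ W₂ = ⊤)
    {ι : Type*} {e : ι → V} (he : span ℝ (range e) = W₁)
    {y : V} (hy : y ∈ W₂) (h : ∀ k, σ (e k) y = 0) : y = 0 := by
  have h₁ : W₁ ≤ LinearMap.ker (σ y) :=
    he ▸ span_le.2 (range_subset_iff.2 fun k => hσ.eq_iff.1 (h k))
  have h₂ : W₂ ≤ LinearMap.ker (σ y) := fun g hg => apply_eq_zero_of_eq_sympOrth hW₂ hy hg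
  have h₁₂ : ⊤ ≤ LinearMap.ker (σ y) := hsup ▸ sup_le h₁ h₂
  exact hnd y fun w => h₁₂ trivial

lemma eq_sum_apply_smul_of_mem (hσ : σ.IsAlt) (hnd : σ.SeparatingLeft)
    {W₁ W₂ : Submodule ℝ V} (hW₂ : W₂ = sympOrth σ W₂) (hsup : W₁ ⊔ W₂ = ⊤)
    {ι : Type*} [Fintype ι] [DecidableEq ι] {e f : ι → V} (he : span ℝ (range e) = W₁)
    (hf : ∀ l, f l ∈ W₂) (hef : ∀ k l, σ (e k) (f l) = if k = l then 1 else 0)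
    {y : V} (hy : y ∈ W₂) : y = ∑ i, σ (e i) y • f i := by
  refine sub_eq_zero.1 (eq_zero_of_forall_apply_eq_zero hσ hnd hW₂ hsup he
    (sub_mem hy (sum_mem fun i _ => smul_mem _ _ (hf i))) fun k => ?_)
  simp [hef]

lemma span_range_eq_of_dual (hσ : σ.IsAlt) (hnd : σ.SeparatingLeft)
    {W₁ W₂ : Submodule ℝ V} (hW₂ : W₂ = sympOrth σ W₂) (hsup : W₁ ⊔ W₂ = ⊤)
    {ι : Type*} [Fintype ι] [DecidableEq ι] {e f : ι → V} (he : span ℝ (range e) = W₁)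
    (hf : ∀ l, f l ∈ W₂) (hef : ∀ k l, σ (e k) (f l) = if k = l then 1 else 0) :
    span ℝ (range f) = W₂ := by
  refine le_antisymm (span_le.2 (range_subset_iff.2 hf)) fun y hy => ?_
  rw [eq_sum_apply_smul_of_mem hσ hnd hW₂ hsup he hf hef hy]
  exact sum_mem fun i _ => smul_mem _ _ (subset_span (mem_range_self i))

variable [FiniteDimensional ℝ V]

lemma two_mul_finrank_eq_of_eq_sympOrth (hσ : σ.IsAlt) (hnd : σ.SeparatingLeft)
    {W : Submodule ℝ V} (hW : W = sympOrth σ W) : 2 * finrank ℝ W = finrank ℝ V := by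
  have h := LinearMap.BilinForm.finrank_orthogonal
    (hσ.isRefl.nondegenerate_iff_separatingLeft.2 hnd) W
  rw [← sympOrth_eq_orthogonal hσ, ← hW] at h
  have := W.finrank_le
  omega

lemma isCompl_of_eq_sympOrth (hσ : σ.IsAlt) (hnd : σ.SeparatingLeft)
    {W W' : Submodule ℝ V} (hW : W = sympOrth σ W) (hW' : W' = sympOrth σ W')
    (h : W ⊓ W' = ⊥) : IsCompl W W' := by
  refine (isCompl_iff_disjoint W W' ?_).2 (disjoint_iff.2 h)
  have := two_mul_finrank_eq_of_eq_sympOrth hσ hnd hW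
  have := two_mul_finrank_eq_of_eq_sympOrth hσ hnd hW'
  omega

lemma exists_dual_family (hσ : σ.IsAlt) (hnd : σ.SeparatingLeft)
    {W₁ W₂ : Submodule ℝ V} (hW₁ : W₁ = sympOrth σ W₁) (hW₂ : W₂ = sympOrth σ W₂)
    (hsup : W₁ ⊔ W₂ = ⊤) {ι : Type*} [Fintype ι] [DecidableEq ι] {e : ι → V}
    (hli : LinearIndependent ℝ e) (he : span ℝ (range e) = W₁) :
    ∃ f : ι → V, (∀ l, f l ∈ W₂) ∧ ∀ k l, σ (e k) (f l) = if k = l then 1 else 0 := by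
  let φ : W₂ →ₗ[ℝ] ι → ℝ := LinearMap.pi (fun k => σ (e k)) ∘ₗ W₂.subtype
  have hinj : Function.Injective φ := by
    refine (injective_iff_map_eq_zero φ).2 fun y hy => Subtype.ext ?_
    exact eq_zero_of_forall_apply_eq_zero hσ hnd hW₂ hsup he y.2 (congr_fun hy)
  have hdim : finrank ℝ W₂ = finrank ℝ (ι → ℝ) := by
    have h₁ := two_mul_finrank_eq_of_eq_sympOrth hσ hnd hW₁
    have h₂ := two_mul_finrank_eq_of_eq_sympOrth hσ hnd hW₂
    rw [Module.finrank_fintype_fun_eq_card, ← finrank_span_eq_card hli, he]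
    omega
  choose y hy using fun l : ι =>
    (LinearMap.injective_iff_surjective_of_finrank_eq_finrank hdim).1 hinj (Pi.single l 1)
  refine ⟨fun l => y l, fun l => (y l).2, fun k l => ?_⟩
  simpa [φ, Pi.single_apply] using congr_fun (hy l) k

end Lagrangian

section Graph

variable {V : Type*} [AddCommGroup V] [Module ℝ V] {σ : V →ₗ[ℝ] V →ₗ[ℝ] ℝ}
  {W₁ W₂ W₃ : Submodule ℝ V} {T : V →ₗ[ℝ] V}

lemma apply_comm_of_eq_map_id_add (hσ : σ.IsAlt) (hW₁ : W₁ = sympOrth σ W₁)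
    (hW₂ : W₂ = sympOrth σ W₂) (hW₃ : W₃ = sympOrth σ W₃) (hT : ∀ v, T v ∈ W₂)
    (h₃ : W₃ = W₁.map (LinearMap.id + T)) {u u' : V} (hu : u ∈ W₁) (hu' : u' ∈ W₁) :
    σ u (T u') = σ u' (T u) := by
  have h := apply_eq_zero_of_eq_sympOrth hW₃ (h₃ ▸ mem_map_of_mem hu) (h₃ ▸ mem_map_of_mem hu')
  simp only [LinearMap.add_apply, LinearMap.id_apply, map_add,
    apply_eq_zero_of_eq_sympOrth hW₁ hu hu', apply_eq_zero_of_eq_sympOrth hW₂ (hT u) (hT u'),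
    ← hσ.neg u' (T u)] at h
  linarith

variable {ι : Type*} [Fintype ι] {e f : ι → V}

lemma map_sum_smul_eq_sum_mulVec_smul (hT : ∀ v, T v = ∑ i, σ (e i) (T v) • f i)
    (x : ι → ℝ) :
    T (∑ j, x j • e j) = ∑ i, (Matrix.of fun i j => σ (e i) (T (e j))).mulVec x i • f i := by
  rw [hT]
  congr! 2 with i
  simp [Matrix.mulVec, dotProduct, mul_comm]

lemma isUnit_of_eq_map_id_add [DecidableEq ι] (hli : LinearIndependent ℝ e)
    (he : span ℝ (range e) = W₁) (hT : ∀ v, T v = ∑ i, σ (e i) (T v) • f i)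
    (h₃ : W₃ = W₁.map (LinearMap.id + T)) (h₁₃ : W₁ ⊓ W₃ = ⊥) :
    IsUnit (Matrix.of fun i j => σ (e i) (T (e j))) := by
  rw [Matrix.isUnit_iff_isUnit_det, isUnit_iff_ne_zero]
  intro hdet
  obtain ⟨x, hx0, hx⟩ := Matrix.exists_mulVec_eq_zero_iff.2 hdet
  have hu : ∑ j, x j • e j ∈ W₁ := he ▸ (mem_span_range_iff_exists_fun ℝ).2 ⟨x, rfl⟩
  have hTu : T (∑ j, x j • e j) = 0 := by
    rw [map_sum_smul_eq_sum_mulVec_smul hT, hx]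
    simp
  have hu₃ : ∑ j, x j • e j ∈ W₁ ⊓ W₃ :=
    ⟨hu, h₃ ▸ ⟨_, hu, by rw [LinearMap.add_apply, hTu, add_zero, LinearMap.id_apply]⟩⟩
  rw [h₁₃, mem_bot] at hu₃
  exact hx0 (funext (Fintype.linearIndependent_iff.1 hli x hu₃))

lemma coe_eq_setOf_sum_add_sum_mulVec (he : span ℝ (range e) = W₁)
    (hT : ∀ v, T v = ∑ i, σ (e i) (T v) • f i) (h₃ : W₃ = W₁.map (LinearMap.id + T)) :
    (W₃ : Set V) = {v | ∃ x : ι → ℝ,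
      v = ∑ i, x i • e i + ∑ i, (Matrix.of fun i j => σ (e i) (T (e j))).mulVec x i • f i} := by
  ext v
  simp only [h₃, ← he, SetLike.mem_coe, mem_map, mem_span_range_iff_exists_fun,
    LinearMap.add_apply, LinearMap.id_apply]
  constructor
  · rintro ⟨_, ⟨x, rfl⟩, rfl⟩
    exact ⟨x, by rw [map_sum_smul_eq_sum_mulVec_smul hT]⟩
  · rintro ⟨x, rfl⟩
    exact ⟨_, ⟨x, rfl⟩, by rw [map_sum_smul_eq_sum_mulVec_smul hT]⟩

end Graph

theorem exists_symplectic_basis_three_lagrangians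
    {V : Type*} [AddCommGroup V] [Module ℝ V] [FiniteDimensional ℝ V]
    (n : ℕ) (hdim : finrank ℝ V = 2 * n)
    (σ : V →ₗ[ℝ] V →ₗ[ℝ] ℝ)
    (halt : ∀ v, σ v v = 0)
    (hnd : ∀ v, (∀ w, σ v w = 0) → v = 0)
    (W₁ W₂ W₃ : Submodule ℝ V)
    (hW₁ : W₁ = sympOrth σ W₁) (hW₂ : W₂ = sympOrth σ W₂) (hW₃ : W₃ = sympOrth σ W₃)
    (h12 : W₁ ⊓ W₂ = ⊥) (h13 : W₁ ⊓ W₃ = ⊥) (h23 : W₂ ⊓ W₃ = ⊥) :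
    ∃ (e f : Fin n → V) (A : Matrix (Fin n) (Fin n) ℝ),
      (∀ k l, σ (e k) (e l) = 0) ∧
      (∀ k l, σ (f k) (f l) = 0) ∧
      (∀ k l, σ (e k) (f l) = if k = l then 1 else 0) ∧
      Submodule.span ℝ (Set.range e ∪ Set.range f) = ⊤ ∧
      IsUnit A ∧ A.IsSymm ∧
      W₁ = Submodule.span ℝ (Set.range e) ∧
      W₂ = Submodule.span ℝ (Set.range f) ∧
      (↑W₃ : Set V) =
        {v : V | ∃ x : Fin n → ℝ, v = ∑ i, x i • e i + ∑ i, A.mulVec x i • f i} := by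
  have hd : finrank ℝ W₁ = n := by
    have := two_mul_finrank_eq_of_eq_sympOrth halt hnd hW₁
    omega
  have h₁₂ : W₁ ⊔ W₂ = ⊤ := (isCompl_of_eq_sympOrth halt hnd hW₁ hW₂ h12).codisjoint.eq_top
  obtain ⟨e, hli, he⟩ := exists_linearIndependent_fin_span_eq W₁ hd
  obtain ⟨f, hf, hef⟩ := exists_dual_family halt hnd hW₁ hW₂ h₁₂ hli he
  obtain ⟨T, hTW₂, h₃⟩ :=
    exists_eq_map_id_add_of_isCompl h₁₂ (isCompl_of_eq_sympOrth halt hnd hW₂ hW₃ h23)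
  have hT : ∀ v, T v = ∑ i, σ (e i) (T v) • f i := fun v =>
    eq_sum_apply_smul_of_mem halt hnd hW₂ h₁₂ he hf hef (hTW₂ v)
  have he₁ : ∀ k, e k ∈ W₁ := fun k => he ▸ subset_span (mem_range_self k)
  refine ⟨e, f, Matrix.of fun i j => σ (e i) (T (e j)),
    fun k l => apply_eq_zero_of_eq_sympOrth hW₁ (he₁ k) (he₁ l),
    fun k l => apply_eq_zero_of_eq_sympOrth hW₂ (hf k) (hf l), hef, ?_,
    isUnit_of_eq_map_id_add hli he hT h₃ h13,
    Matrix.IsSymm.ext fun i j =>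
      apply_comm_of_eq_map_id_add halt hW₁ hW₂ hW₃ hTW₂ h₃ (he₁ j) (he₁ i),
    he.symm, (span_range_eq_of_dual halt hnd hW₂ h₁₂ he hf hef).symm,
    coe_eq_setOf_sum_add_sum_mulVec he hT h₃⟩
  rw [span_union, he, span_range_eq_of_dual halt hnd hW₂ h₁₂ he hf hef, h₁₂]
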